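/- arXiv:1503.08253 — 3 statements merged into one kernel-verified Lean document; each statement's English description precedes it below -/
import Mathlib

section
/- Let F ∈ ℂ[x_1,…,x_n] be a nonzero homogeneous form of degree d and let α ∈ T_1 be a linear form in the dual variables. Then the Waring rank satisfies r(F) ≥ al(α∘F) − al(α²∘F). -/
open MvPolynomial

/-- The iterated partial derivative `∂^m` applied to `F`: on a monomial `x^k` it gives
`(∏ᵢ kᵢ(kᵢ-1)⋯(kᵢ-mᵢ+1)) · x^(k-m)`, i.e. each dual variable `αᵢ` acts as `∂/∂xᵢ`. -/
noncomputable def mderiv {σ : Type*} (m : σ →₀ ℕ) (F : MvPolynomial σ ℂ) :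
    MvPolynomial σ ℂ :=
  (AddMonoidAlgebra.coeff F).sum fun k c =>
    MvPolynomial.monomial (k - m) (c * ∏ i ∈ m.support, (Nat.descFactorial (k i) (m i) : ℂ))

/-- The apolarity action `Θ ∘ F` of a polynomial `Θ` in the dual variables on `F`,
as a constant-coefficient differential operator. -/
noncomputable def diffOp {σ : Type*} (Θ F : MvPolynomial σ ℂ) : MvPolynomial σ ℂ :=
  (AddMonoidAlgebra.coeff Θ).sum fun m c => c • mderiv m F

/-- Apolar length `al F`: the dimension of the space `Diff(F) = {Θ ∘ F : Θ ∈ T}` of all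
partial derivatives of `F` of all orders (including `F` itself). -/
noncomputable def apolarLength {σ : Type*} (F : MvPolynomial σ ℂ) : ℕ :=
  Module.finrank ℂ (Submodule.span ℂ (Set.range fun Θ => diffOp Θ F))

/-- The Hilbert function of the apolar algebra of `F`: the dimension of the span of the
`i`-th order partial derivatives `{Θ ∘ F : Θ homogeneous of degree i}`. -/
noncomputable def hilbFn {σ : Type*} (F : MvPolynomial σ ℂ) (i : ℕ) : ℕ :=
  Module.finrank ℂ (Submodule.span ℂ
    {G : MvPolynomial σ ℂ | ∃ Θ : MvPolynomial σ ℂ, Θ.IsHomogeneous i ∧ diffOp Θ F = G})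

/-- Waring rank of a degree-`d` form: the least `r` such that
`F = c₁ ℓ₁^d + ⋯ + c_r ℓ_r^d` for linear forms `ℓᵢ` and scalars `cᵢ ∈ ℂ`. -/
noncomputable def waringRank {σ : Type*} [Fintype σ] (d : ℕ) (F : MvPolynomial σ ℂ) : ℕ :=
  sInf {r : ℕ | ∃ (c : Fin r → ℂ) (v : Fin r → σ → ℂ),
    F = ∑ i, c i • (∑ j, v i j • MvPolynomial.X j) ^ d}

/-!
Write `F = ∑ᵢ cᵢ ℓᵢ^d` with `r(F)` terms, `ℓᵢ = ∑ⱼ vᵢⱼ xⱼ`. For a linear `α` we have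
`α∘ℓ^(k+1) = (k+1) α(v) ℓ^k`, so `α∘F` lies in the span `V` of the powers `ℓᵢ^k`, `k ≤ d - 1`,
of those `ℓᵢ` with `α(vᵢ) ≠ 0`. The space `V` is closed under differentiation, hence contains
`Diff(α∘F)`, and `α` maps `V` onto `V` modulo the at most `r(F)` top powers `ℓᵢ^(d-1)`. So the
kernel of `α` on `V`, and a fortiori on `Diff(α∘F)`, has dimension at most `r(F)`; on
`Diff(α∘F)` that dimension is `al(α∘F) - al(α²∘F)`, as `α∘Diff(α∘F) = Diff(α²∘F)`.

That `r(F)` is attained, i.e. that every form of degree `d` is a sum of `d`-th powers of linear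
forms, follows by polarization: the coefficient of `t` in `(ℓ + t m)^D` is `D m ℓ^(D-1)`.
-/

theorem Submodule.mem_of_forall_sum_pow_smul_mem {K M : Type*} [Field K] [Infinite K]
    [AddCommGroup M] [Module K M] (U : Submodule K M) {N : ℕ} (w : ℕ → M)
    (h : ∀ t : K, ∑ i ∈ Finset.range (N + 1), t ^ i • w i ∈ U) {j : ℕ} (hj : j ≤ N) :
    w j ∈ U := by
  rw [← Submodule.Quotient.mk_eq_zero, ← Module.forall_dual_apply_eq_zero_iff K]
  intro φ
  set ψ := φ ∘ₗ U.mkQ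
  have hp : (∑ i ∈ Finset.range (N + 1), Polynomial.C (ψ (w i)) * Polynomial.X ^ i) = 0 := by
    refine Polynomial.funext fun t => ?_
    have : ψ (∑ i ∈ Finset.range (N + 1), t ^ i • w i) = 0 := by
      rw [LinearMap.comp_apply, Submodule.mkQ_apply, (Submodule.Quotient.mk_eq_zero U).mpr (h t),
        map_zero]
    simp only [map_sum, map_smul, smul_eq_mul] at this
    simp only [Polynomial.eval_finsetSum, Polynomial.eval_mul, Polynomial.eval_C,
      Polynomial.eval_pow, Polynomial.eval_X, Polynomial.eval_zero]
    rw [← this]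
    exact Finset.sum_congr rfl fun i _ => mul_comm _ _
  simpa [Polynomial.finsetSum_coeff, Polynomial.coeff_C_mul, Polynomial.coeff_X_pow,
    Nat.lt_succ_of_le hj, ψ] using congrArg (Polynomial.coeff · j) hp

section SumsOfPowers

variable {K A : Type*} [Field K] [CharZero K] [CommRing A] [Algebra K A]

theorem Submodule.mul_mul_pow_pred_mem_of_forall_smul_add_pow_mem {U : Submodule K A}
    {x a ℓ : A} {D : ℕ} (hD : D ≠ 0) (h : ∀ t : K, x * (t • a + ℓ) ^ D ∈ U) : x * a * ℓ ^ (D - 1) ∈ U := by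
  have hcoeff := U.mem_of_forall_sum_pow_smul_mem
    (fun i => x * (a ^ i * ℓ ^ (D - i) * (D.choose i : A))) (N := D) (fun t => by
      simpa [add_pow, Finset.mul_sum, smul_pow, smul_mul_assoc, mul_smul_comm] using h t)
    (Nat.one_le_iff_ne_zero.mpr hD)
  have hD' : (D : K) ≠ 0 := Nat.cast_ne_zero.mpr hD
  convert U.smul_mem (D : K)⁻¹ hcoeff using 1
  rw [Nat.choose_one_right, pow_one, show x * (a * ℓ ^ (D - 1) * (D : A)) =
    (D : K) • (x * a * ℓ ^ (D - 1)) by rw [Nat.cast_smul_eq_nsmul, nsmul_eq_mul]; ring,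
    inv_smul_smul₀ hD']

theorem Submodule.pow_le_span_image_pow (L : Submodule K A) (d : ℕ) :
    L ^ d ≤ span K ((· ^ d) '' L) := by
  intro x hx
  suffices ∀ e, d ≤ e → ∀ ℓ ∈ L, x * ℓ ^ (e - d) ∈ span K ((· ^ e) '' L) by
    simpa using this d le_rfl 0 L.zero_mem
  induction hx using Submodule.pow_induction_on_left' with
  | algebraMap r =>
    intro e _ ℓ hℓ
    rw [Algebra.algebraMap_eq_smul_one, smul_one_mul, Nat.sub_zero]
    exact smul_mem _ r (subset_span ⟨ℓ, hℓ, rfl⟩)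
  | add x y i _ _ hx hy =>
    intro e he ℓ hℓ
    rw [add_mul]
    exact add_mem (hx e he ℓ hℓ) (hy e he ℓ hℓ)
  | mem_mul a ha i x _ hx =>
    intro e he ℓ hℓ
    rw [mul_comm a x, show e - i.succ = e - i - 1 by omega]
    exact mul_mul_pow_pred_mem_of_forall_smul_add_pow_mem (by omega)
      fun t => hx e (by omega) _ (add_mem (L.smul_mem t ha) hℓ)

end SumsOfPowers

theorem MvPolynomial.IsHomogeneous.exists_eq_sum_smul_pow {σ K : Type*} [Fintype σ] [Field K]
    [CharZero K] {F : MvPolynomial σ K} {d : ℕ} (hF : F.IsHomogeneous d) :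
    ∃ (r : ℕ) (c : Fin r → K) (v : Fin r → σ → K), F = ∑ i, c i • (∑ j, v i j • X j) ^ d := by
  have hmem : F ∈ Submodule.span K
      ((· ^ d) '' Submodule.span K (Set.range (X : σ → MvPolynomial σ K))) := by
    rw [← homogeneousSubmodule_one_eq_span_X]
    refine Submodule.pow_le_span_image_pow _ d ?_
    rwa [homogeneousSubmodule_one_pow, mem_homogeneousSubmodule]
  obtain ⟨r, c, g, hg⟩ := Submodule.mem_span_set'.mp hmem
  choose ℓ hℓ hℓg using fun i => (g i).2
  choose v hv using fun i => (Submodule.mem_span_range_iff_exists_fun K).mp (hℓ i)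
  exact ⟨r, c, v, by simp only [hv, hℓg, hg]⟩

section Calculus

variable {σ : Type*}

lemma mderiv_monomial (m k : σ →₀ ℕ) (c : ℂ) :
    mderiv m (monomial k c) =
      monomial (k - m) (c * ∏ i ∈ m.support, ((k i).descFactorial (m i) : ℂ)) := by
  rw [mderiv, ← single_eq_monomial, AddMonoidAlgebra.coeff_single,
    Finsupp.sum_single_index (by simp)]

lemma mderiv_add (m : σ →₀ ℕ) (F G : MvPolynomial σ ℂ) :
    mderiv m (F + G) = mderiv m F + mderiv m G :=
  Finsupp.sum_add_index' (fun _ => by simp) fun _ _ _ => by rw [add_mul, map_add]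

lemma mderiv_smul (m : σ →₀ ℕ) (c : ℂ) (F : MvPolynomial σ ℂ) :
    mderiv m (c • F) = c • mderiv m F := by
  rw [mderiv, mderiv, AddMonoidAlgebra.coeff_smul, Finsupp.sum_smul_index (fun _ => by simp),
    Finsupp.smul_sum]
  exact Finsupp.sum_congr fun k _ => by rw [smul_monomial, smul_eq_mul, mul_assoc]

lemma mderiv_zero (F : MvPolynomial σ ℂ) : mderiv 0 F = F := by
  simp [mderiv, ← single_eq_monomial, AddMonoidAlgebra.sum_coeff_single]

lemma mderiv_single_one (j : σ) (F : MvPolynomial σ ℂ) :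
    mderiv (Finsupp.single j 1) F = pderiv j F := by
  induction F using MvPolynomial.induction_on' with
  | add p q hp hq => rw [mderiv_add, map_add, hp, hq]
  | monomial k c => classical simp [mderiv_monomial, pderiv_monomial]

lemma mderiv_mderiv (a b : σ →₀ ℕ) (F : MvPolynomial σ ℂ) :
    mderiv a (mderiv b F) = mderiv (a + b) F := by
  classical
  induction F using MvPolynomial.induction_on' with
  | add p q hp hq => rw [mderiv_add, mderiv_add, mderiv_add, hp, hq]
  | monomial k c =>
    set s := a.support ∪ b.support
    have extend : ∀ u : σ →₀ ℕ, u.support ⊆ s → ∀ w : σ →₀ ℕ,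
        ∏ i ∈ u.support, ((w i).descFactorial (u i) : ℂ) =
          ∏ i ∈ s, ((w i).descFactorial (u i) : ℂ) := fun u hu w =>
      Finset.prod_subset hu fun i _ hi => by simp [Finsupp.notMem_support_iff.mp hi]
    rw [mderiv_monomial, mderiv_monomial, mderiv_monomial, tsub_tsub, add_comm b a, mul_assoc,
      extend b Finset.subset_union_right, extend a Finset.subset_union_left,
      extend (a + b) Finsupp.support_add, ← Finset.prod_mul_distrib]
    refine congrArg _ (congrArg _ (Finset.prod_congr rfl fun i _ => ?_))
    have h := Nat.descFactorial_mul_descFactorial (n := k i) (Nat.le_add_left (b i) (a i))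
    rw [Nat.add_sub_cancel] at h
    rw [Finsupp.tsub_apply, Finsupp.add_apply, ← h]
    push_cast
    ring

lemma diffOp_monomial (a : σ →₀ ℕ) (c : ℂ) (F : MvPolynomial σ ℂ) :
    diffOp (monomial a c) F = c • mderiv a F := by
  rw [diffOp, ← single_eq_monomial, AddMonoidAlgebra.coeff_single,
    Finsupp.sum_single_index (by simp)]

lemma diffOp_C (a : ℂ) (F : MvPolynomial σ ℂ) : diffOp (C a) F = a • F := by
  rw [← monomial_zero', diffOp_monomial, mderiv_zero]

lemma diffOp_X (j : σ) (F : MvPolynomial σ ℂ) : diffOp (X j) F = pderiv j F := by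
  rw [X, diffOp_monomial, one_smul, mderiv_single_one]

lemma diffOp_add_left (Θ Ψ F : MvPolynomial σ ℂ) :
    diffOp (Θ + Ψ) F = diffOp Θ F + diffOp Ψ F :=
  Finsupp.sum_add_index' (fun _ => zero_smul _ _) fun _ _ _ => add_smul _ _ _

lemma diffOp_smul_left (c : ℂ) (Θ F : MvPolynomial σ ℂ) :
    diffOp (c • Θ) F = c • diffOp Θ F := by
  rw [diffOp, diffOp, AddMonoidAlgebra.coeff_smul,
    Finsupp.sum_smul_index (fun _ => by simp), Finsupp.smul_sum]
  exact Finsupp.sum_congr fun _ _ => mul_smul _ _ _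

lemma diffOp_zero_left (F : MvPolynomial σ ℂ) : diffOp 0 F = 0 := by
  simpa using diffOp_smul_left 0 0 F

lemma diffOp_add_right (Θ F G : MvPolynomial σ ℂ) :
    diffOp Θ (F + G) = diffOp Θ F + diffOp Θ G := by
  rw [diffOp, diffOp, diffOp, ← Finsupp.sum_add]
  exact Finsupp.sum_congr fun _ _ => by rw [mderiv_add, smul_add]

lemma diffOp_smul_right (c : ℂ) (Θ F : MvPolynomial σ ℂ) :
    diffOp Θ (c • F) = c • diffOp Θ F := by
  rw [diffOp, diffOp, Finsupp.smul_sum]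
  exact Finsupp.sum_congr fun _ _ => by rw [mderiv_smul, smul_comm]

noncomputable def diffOpₗ (Θ : MvPolynomial σ ℂ) : MvPolynomial σ ℂ →ₗ[ℂ] MvPolynomial σ ℂ where
  toFun := diffOp Θ
  map_add' := diffOp_add_right Θ
  map_smul' c := diffOp_smul_right c Θ

@[simp] lemma diffOpₗ_apply (Θ F : MvPolynomial σ ℂ) : diffOpₗ Θ F = diffOp Θ F := rfl

lemma diffOp_mul (Θ Ψ F : MvPolynomial σ ℂ) :
    diffOp (Θ * Ψ) F = diffOp Θ (diffOp Ψ F) := by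
  induction Θ using MvPolynomial.induction_on' with
  | add p q hp hq => rw [add_mul, diffOp_add_left, hp, hq, diffOp_add_left]
  | monomial a c =>
    induction Ψ using MvPolynomial.induction_on' with
    | add p q hp hq => rw [mul_add, diffOp_add_left, hp, hq, diffOp_add_left, diffOp_add_right]
    | monomial b c' =>
      rw [monomial_mul, diffOp_monomial, diffOp_monomial, diffOp_monomial, mderiv_smul,
        mderiv_mderiv, smul_smul]

lemma diffOp_mem_of_forall_pderiv_mem {V : Submodule ℂ (MvPolynomial σ ℂ)}
    (hV : ∀ j, ∀ P ∈ V, pderiv j P ∈ V) (Θ : MvPolynomial σ ℂ) {P : MvPolynomial σ ℂ}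
    (hP : P ∈ V) : diffOp Θ P ∈ V := by
  induction Θ using MvPolynomial.induction_on generalizing P with
  | C a => rw [diffOp_C]; exact V.smul_mem a hP
  | add p q hp hq => rw [diffOp_add_left]; exact V.add_mem (hp hP) (hq hP)
  | mul_X p j hp => rw [diffOp_mul, diffOp_X]; exact hp (hV j P hP)

/-- `Diff(F)` -/
noncomputable def diffSpan (F : MvPolynomial σ ℂ) : Submodule ℂ (MvPolynomial σ ℂ) :=
  Submodule.span ℂ (Set.range fun Θ => diffOp Θ F)

lemma diffSpan_diffOp (Ψ F : MvPolynomial σ ℂ) :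
    diffSpan (diffOp Ψ F) = (diffSpan F).map (diffOpₗ Ψ) := by
  rw [diffSpan, diffSpan, Submodule.map_span, ← Set.range_comp]
  congr 2
  ext Θ
  rw [Function.comp_apply, diffOpₗ_apply, ← diffOp_mul, mul_comm, diffOp_mul]

lemma diffSpan_le {V : Submodule ℂ (MvPolynomial σ ℂ)} (hV : ∀ j, ∀ P ∈ V, pderiv j P ∈ V)
    {F : MvPolynomial σ ℂ} (hF : F ∈ V) : diffSpan F ≤ V :=
  Submodule.span_le.mpr <| Set.range_subset_iff.mpr fun Θ => diffOp_mem_of_forall_pderiv_mem hV Θ hF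

end Calculus

section LinearForms

variable {σ ι : Type*} [Fintype σ]

lemma pderiv_sum_smul_X (j : σ) (v : σ → ℂ) :
    pderiv j (∑ i, v i • X i : MvPolynomial σ ℂ) = C (v j) := by
  classical simp [pderiv_X, Pi.single_apply, smul_eq_C_mul]

lemma diffOp_sum_smul_X_pow {α : MvPolynomial σ ℂ} (hα : α.IsHomogeneous 1) (v : σ → ℂ)
    (k : ℕ) : diffOp α ((∑ j, v j • X j) ^ k) = (k * eval v α) • (∑ j, v j • X j) ^ (k - 1) := by
  have hα' : α ∈ Submodule.span ℂ (Set.range X) := by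
    rwa [← homogeneousSubmodule_one_eq_span_X, mem_homogeneousSubmodule]
  clear hα
  induction hα' using Submodule.span_induction with
  | mem _ hX =>
    obtain ⟨j, rfl⟩ := hX
    rw [diffOp_X, pderiv_pow, pderiv_sum_smul_X, eval_X, smul_eq_C_mul, map_mul, map_natCast]
    ring
  | zero => rw [diffOp_zero_left, map_zero, mul_zero, zero_smul]
  | add β γ _ _ hβ hγ => rw [diffOp_add_left, hβ, hγ, map_add, mul_add, add_smul]
  | smul a β _ hβ => rw [diffOp_smul_left, hβ, smul_eval, smul_smul]; ring_nf

/-- The span of the powers `ℓᵢ^k`, `k ≤ N`, of the linear forms `ℓᵢ = ∑ⱼ vᵢⱼ xⱼ`. -/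
noncomputable def powersSpan (v : ι → σ → ℂ) (N : ℕ) : Submodule ℂ (MvPolynomial σ ℂ) :=
  Submodule.span ℂ (Set.range fun p : ι × Fin (N + 1) => (∑ j, v p.1 j • X j) ^ (p.2 : ℕ))

instance [Finite ι] (v : ι → σ → ℂ) (N : ℕ) : FiniteDimensional ℂ (powersSpan v N) :=
  FiniteDimensional.span_of_finite ℂ (Set.finite_range _)

lemma pow_mem_powersSpan (v : ι → σ → ℂ) (i : ι) {k N : ℕ} (hk : k ≤ N) :
    (∑ j, v i j • X j) ^ k ∈ powersSpan v N :=
  Submodule.subset_span ⟨(i, ⟨k, Nat.lt_succ_of_le hk⟩), rfl⟩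

lemma pderiv_mem_powersSpan (v : ι → σ → ℂ) (N : ℕ) (j : σ) {P : MvPolynomial σ ℂ}
    (hP : P ∈ powersSpan v N) : pderiv j P ∈ powersSpan v N := by
  suffices powersSpan v N ≤ (powersSpan v N).comap (pderiv j).toLinearMap from this hP
  refine Submodule.span_le.mpr (Set.range_subset_iff.mpr fun ⟨i, k⟩ => ?_)
  change pderiv j ((∑ j, v i j • X j) ^ (k : ℕ)) ∈ powersSpan v N
  rw [← diffOp_X, diffOp_sum_smul_X_pow (isHomogeneous_X ℂ j)]
  exact Submodule.smul_mem _ _ (pow_mem_powersSpan v i (by omega))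

lemma powersSpan_le_sup_map {α : MvPolynomial σ ℂ} (hα : α.IsHomogeneous 1) {v : ι → σ → ℂ}
    (hv : ∀ i, eval (v i) α ≠ 0) (N : ℕ) :
    powersSpan v N ≤ Submodule.span ℂ (Set.range fun i => (∑ j, v i j • X j) ^ N) ⊔
      (powersSpan v N).map (diffOpₗ α) := by
  refine Submodule.span_le.mpr (Set.range_subset_iff.mpr fun ⟨i, k⟩ => ?_)
  obtain hk | hk := (Nat.lt_succ_iff.mp k.isLt).eq_or_lt
  · exact Submodule.mem_sup_left (Submodule.subset_span ⟨i, by rw [hk]⟩)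
  · have hc : ((k + 1 : ℕ) * eval (v i) α : ℂ) ≠ 0 :=
      mul_ne_zero (Nat.cast_ne_zero.mpr (k : ℕ).succ_ne_zero) (hv i)
    have himage := Submodule.mem_map_of_mem (f := diffOpₗ α)
      (pow_mem_powersSpan v i (Nat.succ_le_of_lt hk))
    rw [diffOpₗ_apply, diffOp_sum_smul_X_pow hα, Nat.succ_sub_one] at himage
    have := Submodule.smul_mem _ (((k + 1 : ℕ) * eval (v i) α : ℂ))⁻¹ himage
    rw [smul_smul, inv_mul_cancel₀ hc, one_smul] at this
    exact Submodule.mem_sup_right this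

lemma diffOp_sum_smul_pow_mem_powersSpan [Fintype ι] {α : MvPolynomial σ ℂ}
    (hα : α.IsHomogeneous 1) (c : ι → ℂ) (v : ι → σ → ℂ) (d : ℕ) :
    diffOp α (∑ i, c i • (∑ j, v i j • X j) ^ d) ∈
      powersSpan (fun i : {i // eval (v i) α ≠ 0} => v i) (d - 1) := by
  rw [← diffOpₗ_apply, map_sum]
  refine Submodule.sum_mem _ fun i _ => ?_
  rw [map_smul, diffOpₗ_apply, diffOp_sum_smul_X_pow hα]
  by_cases hi : eval (v i) α = 0
  · simp [hi]
  · exact Submodule.smul_mem _ _ (Submodule.smul_mem _ _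
      (pow_mem_powersSpan (fun i : {i // eval (v i) α ≠ 0} => v i) ⟨i, hi⟩ le_rfl))

end LinearForms

section LinearAlgebra

variable {K M M₂ : Type*} [DivisionRing K] [AddCommGroup M] [Module K M] [AddCommGroup M₂]
  [Module K M₂]

lemma Submodule.finrank_map_add_finrank_inf_ker (f : M →ₗ[K] M₂) (p : Submodule K M)
    [FiniteDimensional K p] :
    Module.finrank K (p.map f) + Module.finrank K ↥(p ⊓ LinearMap.ker f) = Module.finrank K p := by
  rw [← LinearMap.finrank_range_add_finrank_ker (f.domRestrict p), LinearMap.range_domRestrict,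
    LinearMap.ker_domRestrict]
  congr 1
  exact ((Submodule.comapSubtypeEquivOfLe inf_le_left).symm.trans
    (LinearEquiv.ofEq _ _ (by ext x; simp))).finrank_eq

/-- `dim D - dim f(D) = dim (D ⊓ ker f) ≤ dim (V ⊓ ker f) = dim V - dim f(V) ≤ dim W` -/
lemma Submodule.finrank_sub_finrank_map_le (f : M →ₗ[K] M) {D V W : Submodule K M}
    [FiniteDimensional K V] [FiniteDimensional K W] (hDV : D ≤ V) (hV : V ≤ W ⊔ V.map f) :
    Module.finrank K D - Module.finrank K (D.map f) ≤ Module.finrank K W := by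
  have : FiniteDimensional K D := Submodule.finiteDimensional_of_le hDV
  have hD := D.finrank_map_add_finrank_inf_ker f
  have hV' := V.finrank_map_add_finrank_inf_ker f
  have hker := Submodule.finrank_mono (inf_le_inf_right (LinearMap.ker f) hDV)
  have hsup := (Submodule.finrank_mono hV).trans (W.finrank_add_le_finrank_add_finrank (V.map f))
  omega

end LinearAlgebra

theorem apolarLength_sub_le_card {σ ι : Type*} [Fintype σ] [Fintype ι]
    {α : MvPolynomial σ ℂ} (hα : α.IsHomogeneous 1) {F : MvPolynomial σ ℂ} {d : ℕ}
    (c : ι → ℂ) (v : ι → σ → ℂ) (hF : F = ∑ i, c i • (∑ j, v i j • X j) ^ d) :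
    apolarLength (diffOp α F) - apolarLength (diffOp (α ^ 2) F) ≤ Fintype.card ι := by
  let w := fun i : {i // eval (v i) α ≠ 0} => v i
  have hG : diffOp α F ∈ powersSpan w (d - 1) :=
    hF ▸ diffOp_sum_smul_pow_mem_powersSpan hα c v d
  have hα2 : apolarLength (diffOp (α ^ 2) F) =
      Module.finrank ℂ ((diffSpan (diffOp α F)).map (diffOpₗ α)) := by
    rw [pow_two, diffOp_mul, apolarLength, ← diffSpan, diffSpan_diffOp]
  have : FiniteDimensional ℂ
      (Submodule.span ℂ (Set.range fun i => (∑ j, w i j • X j : MvPolynomial σ ℂ) ^ (d - 1))) :=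
    FiniteDimensional.span_of_finite ℂ (Set.finite_range _)
  rw [hα2]
  calc _ ≤ _ := Submodule.finrank_sub_finrank_map_le (diffOpₗ α)
        (diffSpan_le (pderiv_mem_powersSpan w (d - 1)) hG)
        (powersSpan_le_sup_map hα (v := w) (fun i => i.2) (d - 1))
    _ ≤ Fintype.card {i // eval (v i) α ≠ 0} := finrank_range_le_card _
    _ ≤ Fintype.card ι := Fintype.card_subtype_le _

theorem stmt3_general (n d : ℕ) (F : MvPolynomial (Fin n) ℂ)
    (hFd : F.IsHomogeneous d)
    (α : MvPolynomial (Fin n) ℂ) (hα : α.IsHomogeneous 1) :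
    apolarLength (diffOp α F) - apolarLength (diffOp (α ^ 2) F) ≤ waringRank d F := by
  obtain ⟨c, v, hF⟩ : ∃ (c : Fin (waringRank d F) → ℂ) (v : Fin (waringRank d F) → Fin n → ℂ),
      F = ∑ i, c i • (∑ j, v i j • X j) ^ d :=
    Nat.sInf_mem hFd.exists_eq_sum_smul_pow
  exact (apolarLength_sub_le_card hα c v hF).trans_eq (Fintype.card_fin _)

/-- For a nonzero homogeneous `F` of degree `d` and a linear form `α` in the dual
variables, `r(F) ≥ al(α∘F) − al(α²∘F)`. -/
theorem stmt3 (n d : ℕ) (F : MvPolynomial (Fin n) ℂ) (hF : F ≠ 0)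
    (hFd : F.IsHomogeneous d)
    (α : MvPolynomial (Fin n) ℂ) (hα : α.IsHomogeneous 1) :
    apolarLength (diffOp α F) - apolarLength (diffOp (α ^ 2) F) ≤ waringRank d F :=
  stmt3_general n d F hFd α hα
end

section
/- Let n ≥ 2 and let 1 ≤ a_1 ≤ a_2 ≤ … ≤ a_n be integers. Then the Waring rank of the monomial x_1^{a_1} x_2^{a_2} ⋯ x_n^{a_n} satisfies r(x_1^{a_1} ⋯ x_n^{a_n}) ≥ (a_2 + 1)(a_3 + 1) ⋯ (a_n + 1). -/
/-!
Normalize a Waring decomposition `x^a = ∑ₖ cₖ ℓₖ^d` so that every `ℓₖ` has coefficient `0` or `1`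
at `xᵢ`, where `aᵢ ≥ 1`. The monomials `x^b` with `b ≤ a` and `bᵢ = 0` are then linearly
independent as functions on the points `vₖ` with `vₖ i = 1`, so `r ≥ ∏_{j ≠ i} (aⱼ + 1)`.
Indeed, if a combination `P` of them of degree `t` vanishes at those points, its homogenization
with respect to `xᵢ` to degree `t + 1` vanishes at every `vₖ`, so by apolarity it annihilates
`x^a`; its coefficients at `b + eᵢ ≤ a` for the top-degree `b` of `P` must then vanish.
-/

open MvPolynomial

open Finset
open scoped Nat

namespace MvPolynomial

variable {K σ : Type*} [Field K]

section LinearForm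

variable [Fintype σ]

noncomputable def linearForm (v : σ → K) : MvPolynomial σ K := ∑ j, v j • X j

lemma linearForm_smul (t : K) (v : σ → K) : linearForm (t • v) = t • linearForm v := by
  simp only [linearForm, Pi.smul_apply, smul_eq_mul, smul_sum, smul_smul]

lemma coeff_linearForm_pow (v : σ → K) (u : σ →₀ ℕ) (d : ℕ) :
    coeff u (linearForm v ^ d) =
      if u.degree = d then u.multinomial * eval v (monomial u 1) else 0 := by
  rw [linearForm, coeff_linearCombination_X_pow_of_fintype, eval_monomial, one_mul]
  rfl

end LinearForm

lemma _root_.Finsupp.prod_factorial_mul_multinomial (u : σ →₀ ℕ) :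
    (u.prod fun _ e => e !) * u.multinomial = u.degree ! :=
  Nat.multinomial_spec _ _

/-- `G ↦ s! · [x^s] Γ(∂)G`, the coefficient of `x^s` in the apolar action of `Γ` on `G`
(the variables of `Γ` act as `∂/∂xⱼ`). -/
noncomputable def apolarFunctional (Γ : MvPolynomial σ K) (s : σ →₀ ℕ) :
    MvPolynomial σ K →ₗ[K] K :=
  ∑ m ∈ Γ.support, (coeff m Γ * ((m + s).prod fun _ e => e ! : ℕ)) • lcoeff K (m + s)

lemma apolarFunctional_monomial (Γ : MvPolynomial σ K) (m s : σ →₀ ℕ) :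
    apolarFunctional Γ s (monomial (m + s) 1) =
      coeff m Γ * ((m + s).prod fun _ e => e ! : ℕ) := by
  classical
  simp only [apolarFunctional, LinearMap.sum_apply, LinearMap.smul_apply, lcoeff_apply,
    smul_eq_mul]
  rw [Finset.sum_eq_single m, coeff_monomial, if_pos rfl, mul_one]
  · intro m' _ hne
    rw [coeff_monomial, if_neg (by simpa using hne.symm), mul_zero]
  · intro hm
    rw [notMem_support_iff.mp hm, zero_mul, zero_mul]

lemma apolarFunctional_linearForm_pow [Fintype σ] {Γ : MvPolynomial σ K} {n d : ℕ}
    (hΓ : Γ.IsHomogeneous n) {s : σ →₀ ℕ} (hd : n + s.degree = d) (v : σ → K) :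
    apolarFunctional Γ s (linearForm v ^ d) = d ! * eval v (monomial s 1) * eval v Γ := by
  conv_rhs => rw [Γ.as_sum, map_sum, Finset.mul_sum]
  simp only [apolarFunctional, LinearMap.sum_apply, LinearMap.smul_apply,
    lcoeff_apply, smul_eq_mul]
  refine Finset.sum_congr rfl fun m hm => ?_
  have hmn : m.degree = n := by
    by_contra h
    exact mem_support_iff.mp hm (hΓ.coeff_eq_zero h)
  have hfac := congrArg (Nat.cast (R := K)) (m + s).prod_factorial_mul_multinomial
  rw [map_add, hmn, hd] at hfac
  have hsplit : monomial (m + s) (1 : K) = monomial m 1 * monomial s 1 := by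
    rw [monomial_mul, one_mul]
  rw [coeff_linearForm_pow, if_pos (by rw [map_add, hmn, hd]), hsplit, map_mul, ← hfac]
  simp only [eval_monomial, one_mul]
  push_cast
  ring

/-- The apolarity lemma: `Γ` vanishes at the points of the decomposition, hence annihilates `x^a`,
and `apolarFunctional Γ (a - m)` reads off `coeff m Γ` from `Γ(∂) x^a`. -/
theorem coeff_eq_zero_of_eval_eq_zero [Fintype σ] [CharZero K] {r : ℕ} {a : σ →₀ ℕ}
    {c : Fin r → K} {v : Fin r → σ → K}
    (hF : monomial a 1 = ∑ k, c k • linearForm (v k) ^ a.degree)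
    {Γ : MvPolynomial σ K} {n : ℕ} (hΓ : Γ.IsHomogeneous n) (hv : ∀ k, eval (v k) Γ = 0)
    {m : σ →₀ ℕ} (hma : m ≤ a) (hm : m.degree = n) : coeff m Γ = 0 := by
  obtain ⟨s, rfl⟩ := exists_add_of_le hma
  have h := congrArg (apolarFunctional Γ s) hF
  simp only [apolarFunctional_monomial, map_sum, map_smul,
    apolarFunctional_linearForm_pow hΓ (s := s) (d := (m + s).degree) (by rw [map_add, hm]), hv,
    mul_zero, smul_zero, Finset.sum_const_zero] at h
  refine (mul_eq_zero.mp h).resolve_right (Nat.cast_ne_zero.mpr ?_)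
  exact (Finset.prod_pos fun _ _ => Nat.factorial_pos _).ne'

section Homogenize

variable {R : Type*} [CommSemiring R]

/-- Homogenization to degree `n` with respect to `X i`; because of truncated subtraction it is
only meaningful when every monomial of `P` has degree at most `n`. -/
noncomputable def homogenize (i : σ) (n : ℕ) (P : MvPolynomial σ R) : MvPolynomial σ R :=
  ∑ m ∈ P.support, monomial (m + Finsupp.single i (n - m.degree)) (coeff m P)

lemma isHomogeneous_homogenize {i : σ} {n : ℕ} {P : MvPolynomial σ R}
    (hP : ∀ m ∈ P.support, m.degree ≤ n) : (homogenize i n P).IsHomogeneous n :=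
  IsHomogeneous.sum _ _ _ fun m hm => isHomogeneous_monomial _ <| by
    rw [map_add, Finsupp.degree_single]
    have := hP m hm
    omega

lemma coeff_homogenize {i : σ} {n : ℕ} {P : MvPolynomial σ R}
    (hP : ∀ m ∈ P.support, m i = 0) {m : σ →₀ ℕ} (hm : m i = 0) :
    coeff (m + Finsupp.single i (n - m.degree)) (homogenize i n P) = coeff m P := by
  classical
  have herase : ∀ m' : σ →₀ ℕ, m' i = 0 → ∀ e, (m' + Finsupp.single i e).erase i = m' :=
    fun m' hm' e => by
      rw [Finsupp.erase_add, Finsupp.erase_single, add_zero,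
        Finsupp.erase_of_notMem_support (Finsupp.notMem_support_iff.mpr hm')]
  rw [homogenize, coeff_sum, Finset.sum_eq_single m, coeff_monomial, if_pos rfl]
  · intro m' hm' hne
    rw [coeff_monomial, if_neg]
    intro h
    apply hne
    rw [← herase m' (hP m' hm'), h, herase m hm]
  · intro hm
    rw [coeff_monomial, if_pos rfl, notMem_support_iff.mp hm]

lemma eval_homogenize (i : σ) (n : ℕ) (P : MvPolynomial σ R) (v : σ → R) :
    eval v (homogenize i n P) =
      ∑ m ∈ P.support, v i ^ (n - m.degree) * eval v (monomial m (coeff m P)) := by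
  simp only [homogenize, map_sum, add_comm _ (Finsupp.single _ _), monomial_single_add, map_mul,
    map_pow, eval_X]

lemma eval_homogenize_of_eq_one {i : σ} {v : σ → R} (hv : v i = 1) (n : ℕ)
    (P : MvPolynomial σ R) : eval v (homogenize i n P) = eval v P := by
  conv_rhs => rw [P.as_sum, map_sum]
  simp only [eval_homogenize, hv, one_pow, one_mul]

lemma eval_homogenize_of_eq_zero {i : σ} {v : σ → R} (hv : v i = 0) {n : ℕ}
    {P : MvPolynomial σ R} (hP : ∀ m ∈ P.support, m.degree < n) :
    eval v (homogenize i n P) = 0 := by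
  rw [eval_homogenize]
  refine Finset.sum_eq_zero fun m hm => ?_
  rw [hv, zero_pow (Nat.sub_ne_zero_of_lt (hP m hm)), zero_mul]

end Homogenize

section Decomposition

variable [Fintype σ] [CharZero K] {r : ℕ} {a : σ →₀ ℕ} {c : Fin r → K} {v : Fin r → σ → K}
  {i : σ}

theorem eq_zero_of_le_erase_of_eval_eq_zero
    (hF : monomial a 1 = ∑ k, c k • linearForm (v k) ^ a.degree) (hi : a i ≠ 0)
    (hv : ∀ k, v k i = 0 ∨ v k i = 1) {P : MvPolynomial σ K}
    (hPa : ∀ m ∈ P.support, m ≤ a.erase i) (hP : ∀ k, v k i = 1 → eval (v k) P = 0) :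
    P = 0 := by
  by_contra hne
  obtain ⟨m₀, hm₀, hmax⟩ := P.support.exists_max_image Finsupp.degree (support_nonempty.mpr hne)
  have hPi : ∀ m ∈ P.support, m i = 0 := fun m hm => by
    simpa using (Finsupp.le_def.mp (hPa m hm)) i
  set t := m₀.degree
  have hΓ : (homogenize i (t + 1) P).IsHomogeneous (t + 1) :=
    isHomogeneous_homogenize fun m hm => (hmax m hm).trans t.le_succ
  have hΓv : ∀ k, eval (v k) (homogenize i (t + 1) P) = 0 := fun k =>
    (hv k).elim (fun h => eval_homogenize_of_eq_zero h fun m hm => Nat.lt_succ_of_le (hmax m hm))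
      (fun h => (eval_homogenize_of_eq_one h _ P).trans (hP k h))
  have hle : m₀ + Finsupp.single i (t + 1 - t) ≤ a := by
    rw [Finsupp.le_def]
    intro j
    by_cases hj : j = i
    · subst hj
      simp [hPi m₀ hm₀, Nat.one_le_iff_ne_zero.mpr hi]
    · simpa [Finsupp.single_eq_of_ne hj, Finsupp.erase_ne hj] using
        (Finsupp.le_def.mp (hPa m₀ hm₀)) j
  have hcoeff := coeff_eq_zero_of_eval_eq_zero hF hΓ hΓv hle (by simp [t])
  rw [coeff_homogenize hPi (hPi m₀ hm₀)] at hcoeff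
  exact mem_support_iff.mp hm₀ hcoeff

theorem card_Iic_erase_le_of_decomposition [DecidableEq σ]
    (hF : monomial a 1 = ∑ k, c k • linearForm (v k) ^ a.degree) (hi : a i ≠ 0)
    (hv : ∀ k, v k i = 0 ∨ v k i = 1) : #(Iic (a.erase i)) ≤ r := by
  classical
  let S := restrictSupport K (↑(Iic (a.erase i)) : Set (σ →₀ ℕ))
  let ev : S →ₗ[K] ({k // v k i = 1} → K) :=
    LinearMap.pi fun k => (aeval (v k)).toLinearMap ∘ₗ S.subtype
  have hev : Function.Injective ev := by
    refine (injective_iff_map_eq_zero ev).mpr fun P hP => Subtype.ext ?_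
    refine eq_zero_of_le_erase_of_eval_eq_zero hF hi hv (fun m hm => by simpa using P.2 hm)
      fun k hk => by simpa [ev] using congrFun hP ⟨k, hk⟩
  calc #(Iic (a.erase i)) = Module.finrank K S := by
        rw [Module.finrank_eq_card_basis (basisRestrictSupport K _)]
        simp
    _ ≤ Module.finrank K ({k // v k i = 1} → K) := LinearMap.finrank_le_finrank_of_injective hev
    _ = Fintype.card {k // v k i = 1} := Module.finrank_fintype_fun_eq_card K
    _ ≤ r := (Fintype.card_subtype_le _).trans (Fintype.card_fin r).le

end Decomposition

section Existence

variable [Fintype σ]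

lemma exists_smul_linearForm_pow_eq (c : K) (v : σ → K) (d : ℕ) (i : σ) :
    ∃ (c' : K) (v' : σ → K),
      c • linearForm v ^ d = c' • linearForm v' ^ d ∧ (v' i = 0 ∨ v' i = 1) := by
  by_cases h : v i = 0
  · exact ⟨c, v, rfl, Or.inl h⟩
  · refine ⟨c * v i ^ d, (v i)⁻¹ • v, ?_, Or.inr (by simp [h])⟩
    rw [linearForm_smul, smul_pow, smul_smul, mul_assoc, ← mul_pow, mul_inv_cancel₀ h, one_pow,
      mul_one]

lemma exists_normalized_decomposition {r d : ℕ} {F : MvPolynomial σ K} {c : Fin r → K}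
    {v : Fin r → σ → K} (hF : F = ∑ k, c k • linearForm (v k) ^ d) (i : σ) :
    ∃ (c' : Fin r → K) (v' : Fin r → σ → K),
      F = ∑ k, c' k • linearForm (v' k) ^ d ∧ ∀ k, v' k i = 0 ∨ v' k i = 1 := by
  choose c' v' h hv' using fun k => exists_smul_linearForm_pow_eq (c k) (v k) d i
  exact ⟨c', v', hF.trans (Finset.sum_congr rfl fun k _ => h k), hv'⟩

variable [CharZero K]

/-- A linear functional killing every `ℓ^d` yields the polynomial
`∑ₘ multinomial(m) φ(x^m) t^m = φ((∑ⱼ tⱼ xⱼ)^d)` in `t`, which vanishes identically. -/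
theorem monomial_mem_span_linearForm_pow (u : σ →₀ ℕ) :
    monomial u (1 : K) ∈
      Submodule.span K (Set.range fun v : σ → K => linearForm v ^ u.degree) := by
  classical
  set W := Submodule.span K (Set.range fun v : σ → K => linearForm v ^ u.degree)
  by_contra hu
  obtain ⟨f, hfu, hfW⟩ := W.exists_dual_map_eq_bot_of_notMem hu inferInstance
  set D := finsuppAntidiag (univ : Finset σ) u.degree
  have hD : ∀ w : σ →₀ ℕ, w ∈ D ↔ w.degree = u.degree := fun w => by
    simp [D, mem_finsuppAntidiag, Finsupp.degree_eq_sum]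
  have hpow : ∀ t : σ → K, linearForm t ^ u.degree =
      ∑ w ∈ D, (w.multinomial * eval t (monomial w 1)) • monomial w 1 := fun t => by
    conv_lhs => rw [(linearForm t ^ u.degree).as_sum]
    refine Finset.sum_subset (fun w hw => ?_) (fun w _ hw => ?_) |>.trans
      (Finset.sum_congr rfl fun w hw => ?_)
    · by_contra hwD
      rw [mem_support_iff, coeff_linearForm_pow, if_neg ((hD w).not.mp hwD)] at hw
      exact hw rfl
    · exact monomial_eq_zero.mpr (notMem_support_iff.mp hw)
    · rw [coeff_linearForm_pow, if_pos ((hD w).mp hw), smul_monomial, smul_eq_mul, mul_one]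
  let Q : MvPolynomial σ K := ∑ w ∈ D, monomial w (w.multinomial * f (monomial w 1))
  have hQ : Q = 0 := MvPolynomial.funext fun t => by
    have h0 : f (linearForm t ^ u.degree) = 0 :=
      LinearMap.le_ker_iff_map.mpr hfW (Submodule.subset_span ⟨t, rfl⟩)
    rw [hpow, map_sum] at h0
    simp only [Q, map_sum, map_zero, eval_monomial, ← h0, map_smul, smul_eq_mul]
    refine Finset.sum_congr rfl fun w _ => ?_
    ring
  have hu' := congrArg (coeff u) hQ
  rw [coeff_sum, Finset.sum_eq_single_of_mem u ((hD u).mpr rfl), coeff_monomial, if_pos rfl,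
    coeff_zero] at hu'
  · exact hfu ((mul_eq_zero.mp hu').resolve_left (Nat.cast_ne_zero.mpr
      (Nat.multinomial_pos _ _).ne'))
  · intro w _ hw
    rw [coeff_monomial, if_neg hw]

theorem mem_span_linearForm_pow {F : MvPolynomial σ K} {d : ℕ} (hF : F.IsHomogeneous d) :
    F ∈ Submodule.span K (Set.range fun v : σ → K => linearForm v ^ d) := by
  rw [F.as_sum]
  refine Submodule.sum_mem _ fun u hu => ?_
  have hu : u.degree = d := by
    by_contra h
    exact mem_support_iff.mp hu (hF.coeff_eq_zero h)
  have := Submodule.smul_mem _ (coeff u F) (monomial_mem_span_linearForm_pow (K := K) u)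
  rwa [smul_monomial, smul_eq_mul, mul_one, hu] at this

theorem exists_waring_decomposition {F : MvPolynomial σ K} {d : ℕ} (hF : F.IsHomogeneous d) :
    ∃ (r : ℕ) (c : Fin r → K) (v : Fin r → σ → K), F = ∑ k, c k • linearForm (v k) ^ d := by
  obtain ⟨r, c, w, hw⟩ := Submodule.mem_span_set'.mp (mem_span_linearForm_pow hF)
  choose v hv using fun k => (w k).2
  exact ⟨r, c, v, hw.symm.trans (Finset.sum_congr rfl fun k _ => by rw [← hv k])⟩

end Existence

lemma _root_.Finsupp.card_Iic_erase [Fintype σ] [DecidableEq σ] (a : σ →₀ ℕ) (i : σ) :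
    #(Iic (a.erase i)) = ∏ j ∈ univ.erase i, (a j + 1) := by
  rw [Finsupp.card_Iic, Finset.prod_subset (subset_univ _) fun j _ hj => by
      rw [Finsupp.notMem_support_iff.mp hj, Nat.card_Iic, zero_add],
    ← Finset.mul_prod_erase univ _ (mem_univ i)]
  simp only [Finsupp.erase_same, Nat.card_Iic, zero_add, one_mul]
  exact Finset.prod_congr rfl fun j hj => by rw [Finsupp.erase_ne (ne_of_mem_erase hj)]

theorem prod_erase_le_waringRank_monomial [Fintype σ] [DecidableEq σ] (a : σ →₀ ℕ) {i : σ}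
    (hi : a i ≠ 0) : ∏ j ∈ univ.erase i, (a j + 1) ≤ waringRank a.degree (monomial a (1 : ℂ)) := by
  rw [← Finsupp.card_Iic_erase]
  refine le_csInf (exists_waring_decomposition (isHomogeneous_monomial 1 rfl)) ?_
  rintro r ⟨c, v, hF⟩
  obtain ⟨c', v', hF', hv'⟩ := exists_normalized_decomposition hF i
  exact card_Iic_erase_le_of_decomposition hF' hi hv'

end MvPolynomial

/-- For `n ≥ 2` and `1 ≤ a₁ ≤ ⋯ ≤ aₙ`, the Waring rank of the monomial
`x₁^{a₁} ⋯ xₙ^{aₙ}` is at least `(a₂+1)(a₃+1)⋯(aₙ+1)`. -/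
theorem stmt10 (n : ℕ) (hn : 2 ≤ n) (a : Fin n → ℕ)
    (ha1 : ∀ i, 1 ≤ a i) :
    ∏ i ∈ Finset.univ.erase (⟨0, by omega⟩ : Fin n), (a i + 1)
      ≤ waringRank (∑ i, a i) (∏ i, (X i : MvPolynomial (Fin n) ℂ) ^ a i) := by
  set a' : Fin n →₀ ℕ := Finsupp.equivFunOnFinite.symm a
  have hmon : ∏ i, (X i : MvPolynomial (Fin n) ℂ) ^ a i = monomial a' 1 := by
    rw [monomial_eq, C_1, one_mul, Finsupp.prod_fintype _ _ fun _ => pow_zero _]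
    rfl
  have hdeg : ∑ i, a i = a'.degree := by rw [Finsupp.degree_eq_sum]; rfl
  rw [hmon, hdeg]
  exact prod_erase_le_waringRank_monomial a' (Nat.one_le_iff_ne_zero.mp (ha1 _))
end

section
/- The ternary quintic x y z³ − 2y²z³ − (1/5)z⁵ ∈ ℂ[x,y,z] has Waring rank exactly 8. -/
open MvPolynomial

/-!
The upper bound is an explicit sum of eight fifth powers. For the lower bound take a decomposition
`F = ∑ cᵢ ℓᵢ⁵`, `ℓᵢ = vᵢ ⬝ᵥ X`, of minimal length `r ≤ 7`, so that the `cᵢ` are nonzero and the `vᵢ`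
pairwise non-proportional, and let `aᵢ` be the `x`-coefficient of `ℓᵢ`. Differentiating in `x` gives
`yz³ = ∑ 5 cᵢ aᵢ ℓᵢ⁴` and `0 = ∑ 20 cᵢ aᵢ² ℓᵢ³`.

The second identity is a cubic relation among at most seven distinct points `[vᵢ]` of `ℙ²` (those
with `aᵢ ≠ 0`). Polarized, it reads `∑ cᵢ aᵢ² ℓᵢ(φ) ℓᵢ(ψ) vᵢ = 0` for all `φ, ψ`, so the points
lying off two given lines, if there are any, are linearly dependent. If the points were not on one
line, every line would miss at least four of them, so any two lines would miss a common one; then no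
three points are collinear, and the line through two of the points together with the line through
two points off it would leave between one and three independent points off both. So they lie on a
line `φ`; then `yz³` is invariant under translation by `φ`, which forces `φ ∥ e₀`, so every `aᵢ = 0`
and `yz³ = 0`.
-/

open Matrix

noncomputable def linForm {σ : Type*} [Fintype σ] (v : σ → ℂ) : MvPolynomial σ ℂ :=
  ∑ j, v j • X j

noncomputable def waringSum {σ : Type*} [Fintype σ] {r : ℕ} (d : ℕ) (c : Fin r → ℂ)
    (v : Fin r → σ → ℂ) : MvPolynomial σ ℂ :=
  ∑ i, c i • linForm (v i) ^ d

section WaringSum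

variable {σ : Type*} [Fintype σ] {r d : ℕ}

lemma eval_linForm (v P : σ → ℂ) : eval P (linForm v) = v ⬝ᵥ P := by
  simp [linForm, dotProduct, map_sum]

lemma eval_waringSum (c : Fin r → ℂ) (v : Fin r → σ → ℂ) (P : σ → ℂ) :
    eval P (waringSum d c v) = ∑ i, c i * (v i ⬝ᵥ P) ^ d := by
  simp [waringSum, map_sum, eval_linForm]

lemma linForm_smul (t : ℂ) (v : σ → ℂ) : linForm (t • v) = t • linForm v := by
  simp [linForm, Finset.smul_sum, smul_smul]

lemma pderiv_linForm [DecidableEq σ] (v : σ → ℂ) (k : σ) :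
    pderiv k (linForm v) = C (v k) := by
  simp [linForm, pderiv_X, Pi.single_apply, smul_eq_C_mul]

lemma pderiv_waringSum [DecidableEq σ] (c : Fin r → ℂ) (v : Fin r → σ → ℂ) (k : σ) :
    pderiv k (waringSum (d + 1) c v) = waringSum d (fun i => (d + 1) * v i k * c i) v := by
  simp only [waringSum, map_sum, Derivation.map_smul, pderiv_pow, pderiv_linForm]
  refine Finset.sum_congr rfl fun i _ => ?_
  simp only [smul_eq_C_mul, map_mul, map_add, map_natCast, map_one, Nat.cast_add, Nat.cast_one,
    add_tsub_cancel_right]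
  ring

lemma waringRank_le {F : MvPolynomial σ ℂ} {c : Fin r → ℂ} {v : Fin r → σ → ℂ}
    (hF : F = waringSum d c v) : waringRank d F ≤ r :=
  Nat.sInf_le ⟨c, v, hF⟩

lemma exists_eq_waringSum_waringRank {F : MvPolynomial σ ℂ} {c : Fin r → ℂ}
    {v : Fin r → σ → ℂ} (hF : F = waringSum d c v) :
    ∃ (c' : Fin (waringRank d F) → ℂ) (v' : Fin (waringRank d F) → σ → ℂ),
      F = waringSum d c' v' :=
  Nat.sInf_mem (s := {r | ∃ (c : Fin r → ℂ) (v : Fin r → σ → ℂ), F = waringSum d c v})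
    ⟨r, c, v, hF⟩

lemma waringSum_eq_of_coeff_eq_zero {c : Fin (r + 1) → ℂ} (v : Fin (r + 1) → σ → ℂ)
    {j : Fin (r + 1)} (hj : c j = 0) :
    waringSum d c v = waringSum d (c ∘ j.succAbove) (v ∘ j.succAbove) := by
  simp [waringSum, Fin.sum_univ_succAbove _ j, hj]

lemma waringSum_eq_of_eq_smul (c : Fin r → ℂ) {v : Fin r → σ → ℂ} {i j : Fin r}
    {t : ℂ} (ht : v j = t • v i) :
    waringSum d c v = waringSum d (c + Pi.single i (t ^ d * c j) - Pi.single j (c j)) v := by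
  have hj : linForm (v j) ^ d = t ^ d • linForm (v i) ^ d := by
    rw [ht, linForm_smul, smul_pow]
  simp only [waringSum, Pi.add_apply, Pi.sub_apply, add_smul, sub_smul, Finset.sum_add_distrib,
    Finset.sum_sub_distrib, Pi.single_apply, ite_smul, zero_smul, Finset.sum_ite_eq',
    Finset.mem_univ, if_true, hj]
  module

lemma exists_waringSum_eq_of_eq_smul {c : Fin (r + 1) → ℂ} {v : Fin (r + 1) → σ → ℂ}
    {i j : Fin (r + 1)} (hij : i ≠ j) {t : ℂ} (ht : v j = t • v i) :
    ∃ (c' : Fin r → ℂ) (v' : Fin r → σ → ℂ), waringSum d c v = waringSum d c' v' := by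
  refine ⟨_, _,
    (waringSum_eq_of_eq_smul c ht).trans (waringSum_eq_of_coeff_eq_zero v (j := j) ?_)⟩
  simp [hij.symm]

lemma exists_smul_eq_of_not_linearIndepOn_pair {ι K V : Type*} [Field K] [AddCommGroup V]
    [Module K V] {v : ι → V} {i j : ι} (hij : i ≠ j) (h : ¬LinearIndepOn K v {i, j}) :
    ∃ t : K, v j = t • v i ∨ v i = t • v j := by
  by_cases hi : v i = 0
  · exact ⟨0, Or.inr (by simp [hi])⟩
  · obtain ⟨t, ht⟩ : ∃ t : K, t • v i = v j := by
      simpa [linearIndepOn_pair_iff v hij hi] using h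
    exact ⟨t, Or.inl ht.symm⟩

theorem nondegenerate_of_eq_waringSum {F : MvPolynomial σ ℂ} {c : Fin r → ℂ}
    {v : Fin r → σ → ℂ} (hF : F = waringSum d c v) (hr : waringRank d F = r) :
    (∀ i, c i ≠ 0) ∧ ∀ i j, i ≠ j → LinearIndepOn ℂ v {i, j} := by
  cases r with
  | zero => exact ⟨finZeroElim, finZeroElim⟩
  | succ m =>
    have no_shorter : ∀ (c' : Fin m → ℂ) (v' : Fin m → σ → ℂ), F ≠ waringSum d c' v' :=
      fun c' v' h => by have := waringRank_le h; omega
    refine ⟨fun j hj => no_shorter _ _ (hF.trans (waringSum_eq_of_coeff_eq_zero v hj)),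
      fun i j hij => by_contra fun hind => ?_⟩
    obtain ⟨t, ht | ht⟩ := exists_smul_eq_of_not_linearIndepOn_pair hij hind
    · obtain ⟨c', v', h⟩ := exists_waringSum_eq_of_eq_smul hij ht
      exact no_shorter c' v' (hF.trans h)
    · obtain ⟨c', v', h⟩ := exists_waringSum_eq_of_eq_smul hij.symm ht
      exact no_shorter c' v' (hF.trans h)

end WaringSum

structure IsCubicRelation {ι : Type*} (S : Finset ι) (v : ι → Fin 3 → ℂ) (w : ι → ℂ) :
    Prop where
  weight_ne_zero : ∀ i ∈ S, w i ≠ 0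
  sum_cube_eq_zero : ∀ P, ∑ i ∈ S, w i * (v i ⬝ᵥ P) ^ 3 = 0

-- `v i` is read as a point of `ℙ²` and `φ` as the line `{P | P ⬝ᵥ φ = 0}`.
open scoped Classical in
noncomputable def offLine {ι : Type*} (S : Finset ι) (v : ι → Fin 3 → ℂ) (φ : Fin 3 → ℂ) :
    Finset ι :=
  S.filter fun i => v i ⬝ᵥ φ ≠ 0

section CubicRelation

variable {ι : Type*} {S : Finset ι} {v : ι → Fin 3 → ℂ} {w : ι → ℂ} {φ ψ : Fin 3 → ℂ}

lemma mem_offLine {i : ι} : i ∈ offLine S v φ ↔ i ∈ S ∧ v i ⬝ᵥ φ ≠ 0 := by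
  classical
  simp [offLine]

lemma offLine_subset : offLine S v φ ⊆ S := fun _ hi => (mem_offLine.mp hi).1

lemma ne_zero_of_mem_offLine {i : ι} (hi : i ∈ offLine S v φ) : v i ≠ 0 := by
  intro h
  simp [mem_offLine, h] at hi

lemma crossProduct_ne_zero_of_linearIndepOn_pair {i j : ι} (hij : i ≠ j)
    (h : LinearIndepOn ℂ v {i, j}) : v i ⨯₃ v j ≠ 0 := by
  rw [crossProduct_ne_zero_iff_linearIndependent, LinearIndependent.pair_iff]
  simpa using (LinearIndepOn.pair_iff v hij).mp h

lemma linearIndepOn_triple_of_triple_product_ne_zero {x y z : ι} (hx : x ∉ ({y, z} : Set ι))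
    (hyz : LinearIndepOn ℂ v {y, z}) (hdet : v x ⬝ᵥ v y ⨯₃ v z ≠ 0) :
    LinearIndepOn ℂ v {x, y, z} := by
  refine (linearIndepOn_insert hx).mpr ⟨hyz, fun hmem => hdet ?_⟩
  rw [Set.image_pair, Submodule.mem_span_pair] at hmem
  obtain ⟨a, b, hab⟩ := hmem
  rw [← hab, add_dotProduct, smul_dotProduct, smul_dotProduct, dot_self_cross, dot_cross_self]
  simp

lemma IsCubicRelation.sum_mul_mul_mul_eq_zero (hR : IsCubicRelation S v w) (φ ψ τ : Fin 3 → ℂ) :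
    ∑ i ∈ S, w i * ((v i ⬝ᵥ φ) * (v i ⬝ᵥ ψ) * (v i ⬝ᵥ τ)) = 0 := by
  have h := hR.sum_cube_eq_zero
  have polarization : 6 * ∑ i ∈ S, w i * ((v i ⬝ᵥ φ) * (v i ⬝ᵥ ψ) * (v i ⬝ᵥ τ)) =
      ∑ i ∈ S, w i * (v i ⬝ᵥ (φ + ψ + τ)) ^ 3 - ∑ i ∈ S, w i * (v i ⬝ᵥ (φ + ψ)) ^ 3
        - ∑ i ∈ S, w i * (v i ⬝ᵥ (φ + τ)) ^ 3 - ∑ i ∈ S, w i * (v i ⬝ᵥ (ψ + τ)) ^ 3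
        + ∑ i ∈ S, w i * (v i ⬝ᵥ φ) ^ 3 + ∑ i ∈ S, w i * (v i ⬝ᵥ ψ) ^ 3
        + ∑ i ∈ S, w i * (v i ⬝ᵥ τ) ^ 3 := by
    simp only [Finset.mul_sum, ← Finset.sum_sub_distrib, ← Finset.sum_add_distrib, dotProduct_add]
    exact Finset.sum_congr rfl fun i _ => by ring
  simp only [h, sub_zero, add_zero, mul_eq_zero, OfNat.ofNat_ne_zero, false_or] at polarization
  exact polarization

variable [DecidableEq ι]

lemma offLine_offLine : offLine (offLine S v φ) v ψ = offLine S v φ ∩ offLine S v ψ := by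
  ext i
  simp only [mem_offLine, Finset.mem_inter]
  tauto

lemma card_offLine_add_card_le {T : Finset ι} (hT : T ⊆ S) (hφ : ∀ i ∈ T, v i ⬝ᵥ φ = 0) :
    (offLine S v φ).card + T.card ≤ S.card := by
  have hsub : offLine S v φ ⊆ S \ T := fun i hi =>
    Finset.mem_sdiff.mpr ⟨offLine_subset hi, fun hiT => (mem_offLine.mp hi).2 (hφ i hiT)⟩
  have := Finset.card_le_card hsub
  rw [Finset.card_sdiff_of_subset hT] at this
  have := Finset.card_le_card hT
  omega

lemma card_offLine_cross_add_two_le {p q : ι} (hp : p ∈ S) (hq : q ∈ S) (hpq : p ≠ q) :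
    (offLine S v (v p ⨯₃ v q)).card + 2 ≤ S.card := by
  simpa [Finset.card_pair hpq] using card_offLine_add_card_le (φ := v p ⨯₃ v q) (T := {p, q})
    (by simp [Finset.insert_subset_iff, hp, hq]) (by simp [dot_self_cross, dot_cross_self])

lemma linearIndepOn_of_card_le_two (hv : (S : Set ι).Pairwise fun i j => LinearIndepOn ℂ v {i, j})
    {T : Finset ι} (hT : T ⊆ S) (h0 : ∀ i ∈ T, v i ≠ 0) (hcard : T.card ≤ 2) :
    LinearIndepOn ℂ v (T : Set ι) := by
  interval_cases h : T.card
  · simp [Finset.card_eq_zero.mp h]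
  · obtain ⟨x, rfl⟩ := Finset.card_eq_one.mp h
    simpa using h0 x (by simp)
  · obtain ⟨x, y, hxy, rfl⟩ := Finset.card_eq_two.mp h
    simpa using hv (hT (by simp)) (hT (by simp)) hxy

lemma linearIndepOn_of_card_le_three
    (hv : (S : Set ι).Pairwise fun i j => LinearIndepOn ℂ v {i, j})
    (hdet : ∀ p ∈ S, ∀ q ∈ S, ∀ r ∈ S, p ≠ q → p ≠ r → q ≠ r → v p ⬝ᵥ v q ⨯₃ v r ≠ 0)
    {T : Finset ι} (hT : T ⊆ S) (h0 : ∀ i ∈ T, v i ≠ 0) (hcard : T.card ≤ 3) :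
    LinearIndepOn ℂ v (T : Set ι) := by
  rcases Nat.lt_or_eq_of_le hcard with h | h
  · exact linearIndepOn_of_card_le_two hv hT h0 (by omega)
  obtain ⟨x, y, z, hxy, hxz, hyz, rfl⟩ := Finset.card_eq_three.mp h
  have hS : x ∈ S ∧ y ∈ S ∧ z ∈ S := ⟨hT (by simp), hT (by simp), hT (by simp)⟩
  simpa using linearIndepOn_triple_of_triple_product_ne_zero (by simp [hxy, hxz])
    (hv hS.2.1 hS.2.2 hyz)
    (hdet x hS.1 y hS.2.1 z hS.2.2 hxy hxz hyz)

namespace IsCubicRelation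

lemma sum_offLine_inter_smul_eq_zero (hR : IsCubicRelation S v w) (φ ψ : Fin 3 → ℂ) :
    ∑ i ∈ offLine S v φ ∩ offLine S v ψ, (w i * (v i ⬝ᵥ φ) * (v i ⬝ᵥ ψ)) • v i = 0 := by
  ext k
  rw [Finset.sum_apply, Pi.zero_apply]
  convert hR.sum_mul_mul_mul_eq_zero φ ψ (Pi.single k 1) using 1
  refine Finset.sum_subset (fun i hi => offLine_subset (Finset.mem_inter.mp hi).1)
    (fun i hiS hi => ?_) |>.trans (Finset.sum_congr rfl fun i _ => ?_)
  · rw [Finset.mem_inter, mem_offLine, mem_offLine] at hi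
    by_cases hφ : v i ⬝ᵥ φ = 0
    · simp [hφ]
    · have hψ : v i ⬝ᵥ ψ = 0 := by_contra fun hψ => hi ⟨⟨hiS, hφ⟩, hiS, hψ⟩
      simp [hψ]
  · simp only [Pi.smul_apply, smul_eq_mul, dotProduct_single, mul_one]
    ring

lemma not_linearIndepOn_offLine_inter (hR : IsCubicRelation S v w)
    (hU : (offLine S v φ ∩ offLine S v ψ).Nonempty) :
    ¬LinearIndepOn ℂ v ↑(offLine S v φ ∩ offLine S v ψ) := by
  intro hind
  obtain ⟨i, hi⟩ := hU
  have hiφ := mem_offLine.mp (Finset.mem_inter.mp hi).1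
  have hiψ := mem_offLine.mp (Finset.mem_inter.mp hi).2
  have := linearIndepOn_finset_iff.mp hind _ (hR.sum_offLine_inter_smul_eq_zero φ ψ) i hi
  exact mul_ne_zero (mul_ne_zero (hR.weight_ne_zero i hiφ.1) hiφ.2) hiψ.2 this

lemma offLine_inter_eq_empty_of_card_le_two (hR : IsCubicRelation S v w)
    (hv : (S : Set ι).Pairwise fun i j => LinearIndepOn ℂ v {i, j})
    (hcard : (offLine S v φ ∩ offLine S v ψ).card ≤ 2) : offLine S v φ ∩ offLine S v ψ = ∅ := by
  by_contra hne
  exact hR.not_linearIndepOn_offLine_inter (Finset.nonempty_iff_ne_empty.mpr hne)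
    (linearIndepOn_of_card_le_two hv (fun i hi => offLine_subset (Finset.mem_inter.mp hi).1)
      (fun i hi => ne_zero_of_mem_offLine (Finset.mem_inter.mp hi).1) hcard)

lemma four_le_card_offLine (hR : IsCubicRelation S v w)
    (hv : (S : Set ι).Pairwise fun i j => LinearIndepOn ℂ v {i, j})
    (hspan : ∀ φ ≠ 0, (offLine S v φ).Nonempty) (hφ : φ ≠ 0) : 4 ≤ (offLine S v φ).card := by
  by_contra hlt
  by_cases h2 : (offLine S v φ).card ≤ 2
  · have := hR.offLine_inter_eq_empty_of_card_le_two hv (φ := φ) (ψ := φ)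
      (by rwa [Finset.inter_self])
    rw [Finset.inter_self] at this
    exact (hspan φ hφ).ne_empty this
  obtain ⟨p, hp, q, hq, hpq⟩ := Finset.one_lt_card.mp (by omega : 1 < (offLine S v φ).card)
  have hpS := offLine_subset hp
  have hqS := offLine_subset hq
  -- `v p ⨯₃ u` is a line through `p` missing `q`
  obtain ⟨u, hu⟩ : ∃ u, (v q ⨯₃ v p) ⬝ᵥ u ≠ 0 := by
    by_contra! h
    exact crossProduct_ne_zero_of_linearIndepOn_pair hpq.symm (hv hqS hpS hpq.symm)
      (dotProduct_eq_zero_iff.mp h)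
  have hq' : q ∈ offLine S v φ ∩ offLine S v (v p ⨯₃ u) := by
    refine Finset.mem_inter.mpr ⟨hq, mem_offLine.mpr ⟨hqS, ?_⟩⟩
    rwa [triple_product_permutation, triple_product_permutation, dotProduct_comm]
  have hcard := card_offLine_add_card_le (S := offLine S v φ) (v := v) (φ := v p ⨯₃ u) (T := {p})
    (by simpa using hp) (by simp [dot_self_cross])
  rw [offLine_offLine, Finset.card_singleton] at hcard
  exact Finset.ne_empty_of_mem hq' (hR.offLine_inter_eq_empty_of_card_le_two hv (by omega))

lemma offLine_inter_nonempty (hR : IsCubicRelation S v w)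
    (hv : (S : Set ι).Pairwise fun i j => LinearIndepOn ℂ v {i, j}) (hS : S.card ≤ 7)
    (hspan : ∀ φ ≠ 0, (offLine S v φ).Nonempty) (hφ : φ ≠ 0) (hψ : ψ ≠ 0) :
    (offLine S v φ ∩ offLine S v ψ).Nonempty := by
  rw [← Finset.card_pos]
  have := Finset.card_union_add_card_inter (offLine S v φ) (offLine S v ψ)
  have : (offLine S v φ ∪ offLine S v ψ).card ≤ S.card :=
    Finset.card_le_card (Finset.union_subset offLine_subset offLine_subset)
  have := hR.four_le_card_offLine hv hspan hφ
  have := hR.four_le_card_offLine hv hspan hψ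
  omega

lemma exists_nonempty_offLine_inter_card_add_two_le (hR : IsCubicRelation S v w)
    (hv : (S : Set ι).Pairwise fun i j => LinearIndepOn ℂ v {i, j}) (hS : S.card ≤ 7)
    (hspan : ∀ φ ≠ 0, (offLine S v φ).Nonempty) (hφ : φ ≠ 0) :
    ∃ ψ, (offLine S v φ ∩ offLine S v ψ).Nonempty ∧
      (offLine S v φ ∩ offLine S v ψ).card + 2 ≤ (offLine S v φ).card := by
  have := hR.four_le_card_offLine hv hspan hφ
  obtain ⟨x, hx, y, hy, hxy⟩ := Finset.one_lt_card.mp (by omega : 1 < (offLine S v φ).card)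
  have hψ := crossProduct_ne_zero_of_linearIndepOn_pair hxy
    (hv (offLine_subset hx) (offLine_subset hy) hxy)
  refine ⟨v x ⨯₃ v y, hR.offLine_inter_nonempty hv hS hspan hφ hψ, ?_⟩
  rw [← offLine_offLine]
  exact card_offLine_cross_add_two_le hx hy hxy

lemma triple_product_ne_zero (hR : IsCubicRelation S v w)
    (hv : (S : Set ι).Pairwise fun i j => LinearIndepOn ℂ v {i, j}) (hS : S.card ≤ 7)
    (hspan : ∀ φ ≠ 0, (offLine S v φ).Nonempty) :
    ∀ p ∈ S, ∀ q ∈ S, ∀ r ∈ S, p ≠ q → p ≠ r → q ≠ r → v p ⬝ᵥ v q ⨯₃ v r ≠ 0 := by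
  intro p hp q hq r hr hpq hpr hqr hdet
  have hcard := card_offLine_add_card_le (S := S) (v := v) (φ := v q ⨯₃ v r) (T := {p, q, r})
    (by simp [Finset.insert_subset_iff, hp, hq, hr])
    (by simp [hdet, dot_self_cross, dot_cross_self])
  rw [Finset.card_eq_three.mpr ⟨p, q, r, hpq, hpr, hqr, rfl⟩] at hcard
  obtain ⟨ψ, hne, hle⟩ := hR.exists_nonempty_offLine_inter_card_add_two_le hv hS hspan
    (crossProduct_ne_zero_of_linearIndepOn_pair hqr (hv hq hr hqr))
  exact hne.ne_empty (hR.offLine_inter_eq_empty_of_card_le_two hv (by omega))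

theorem exists_orthogonal (hR : IsCubicRelation S v w)
    (hv : (S : Set ι).Pairwise fun i j => LinearIndepOn ℂ v {i, j}) (hS : S.card ≤ 7) :
    ∃ φ ≠ 0, ∀ i ∈ S, v i ⬝ᵥ φ = 0 := by
  by_contra! hspan'
  have hspan : ∀ φ ≠ 0, (offLine S v φ).Nonempty := fun φ hφ => by
    obtain ⟨i, hi, hiφ⟩ := hspan' φ hφ
    exact ⟨i, mem_offLine.mpr ⟨hi, hiφ⟩⟩
  have hS4 : 4 ≤ S.card := (hR.four_le_card_offLine hv hspan (φ := Pi.single 0 1) (by simp)).trans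
    (Finset.card_le_card offLine_subset)
  obtain ⟨p, hp, q, hq, hpq⟩ := Finset.one_lt_card.mp (by omega : 1 < S.card)
  have hcard := card_offLine_cross_add_two_le (v := v) hp hq hpq
  obtain ⟨ψ, hne, hle⟩ := hR.exists_nonempty_offLine_inter_card_add_two_le hv hS hspan
    (crossProduct_ne_zero_of_linearIndepOn_pair hpq (hv hp hq hpq))
  exact hR.not_linearIndepOn_offLine_inter hne
    (linearIndepOn_of_card_le_three hv (hR.triple_product_ne_zero hv hS hspan)
      (fun i hi => offLine_subset (Finset.mem_inter.mp hi).1)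
      (fun i hi => ne_zero_of_mem_offLine (Finset.mem_inter.mp hi).1) (by omega))

end IsCubicRelation

end CubicRelation

lemma coords_eq_zero_of_forall_add_eq {φ : Fin 3 → ℂ}
    (h : ∀ P : Fin 3 → ℂ, (P + φ) 1 * (P + φ) 2 ^ 3 = P 1 * P 2 ^ 3) : φ 1 = 0 ∧ φ 2 = 0 := by
  have h0 := h 0
  have h1 := h (Pi.single 1 1)
  have h2 := h (Pi.single 2 1)
  simp only [Pi.add_apply, Pi.zero_apply, Pi.single_apply, Fin.reduceEq, if_true, if_false]
    at h0 h1 h2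
  have hφ2 : φ 2 = 0 := pow_eq_zero_iff three_ne_zero |>.mp (by linear_combination h1 - h0)
  exact ⟨by linear_combination h2 - φ 1 * (3 + 3 * φ 2 + φ 2 ^ 2) * hφ2, hφ2⟩

lemma isCubicRelation_of_eq_waringSum {r : ℕ} {c : Fin r → ℂ} {v : Fin r → Fin 3 → ℂ}
    (h : X 1 * X 2 ^ 3 = waringSum 4 (fun i => 5 * v i 0 * c i) v) (hc : ∀ i, c i ≠ 0) :
    IsCubicRelation (Finset.univ.filter fun i => v i 0 ≠ 0) v (fun i => v i 0 ^ 2 * c i) := by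
  refine ⟨fun i hi => mul_ne_zero (pow_ne_zero 2 (Finset.mem_filter.mp hi).2) (hc i), fun P => ?_⟩
  have h2 := congrArg (pderiv 0) h
  rw [pderiv_waringSum, show pderiv 0 (X 1 * X 2 ^ 3 : MvPolynomial (Fin 3) ℂ) = 0 by
    simp [pderiv_X]] at h2
  have := congrArg (eval P) h2
  rw [eval_waringSum, map_zero] at this
  rw [Finset.sum_filter_of_ne fun i _ hi => by contrapose! hi; simp [hi], ← mul_zero (1 / 20 : ℂ),
    this, Finset.mul_sum]
  refine Finset.sum_congr rfl fun i _ => ?_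
  push_cast
  ring

theorem eight_le_of_pderiv_eq {F : MvPolynomial (Fin 3) ℂ} {r : ℕ} {c : Fin r → ℂ}
    {v : Fin r → Fin 3 → ℂ} (hF' : pderiv 0 F = X 1 * X 2 ^ 3) (hF : F = waringSum 5 c v)
    (hc : ∀ i, c i ≠ 0) (hv : ∀ i j, i ≠ j → LinearIndepOn ℂ v {i, j}) : 8 ≤ r := by
  by_contra! hr
  have h1 : X 1 * X 2 ^ 3 = waringSum 4 (fun i => 5 * v i 0 * c i) v := by
    rw [← hF', hF, pderiv_waringSum]
    norm_num
  have hquartic (P : Fin 3 → ℂ) : P 1 * P 2 ^ 3 = ∑ i, 5 * v i 0 * c i * (v i ⬝ᵥ P) ^ 4 := by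
    simpa [eval_waringSum] using congrArg (eval P) h1
  have hS (i) (hi : v i 0 ≠ 0) : i ∈ Finset.univ.filter fun i => v i 0 ≠ 0 := by simpa using hi
  obtain ⟨φ, hφ, hperp⟩ := (isCubicRelation_of_eq_waringSum h1 hc).exists_orthogonal
    (fun i _ j _ hij => hv i j hij)
    ((Finset.card_le_univ _).trans (by simpa using Nat.le_of_lt_succ hr))
  obtain ⟨hφ1, hφ2⟩ := coords_eq_zero_of_forall_add_eq fun P => by
    rw [hquartic, hquartic]
    refine Finset.sum_congr rfl fun i _ => ?_
    by_cases hi : v i 0 = 0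
    · simp [hi]
    · rw [dotProduct_add, hperp i (hS i hi), add_zero]
  have hφ0 : φ 0 ≠ 0 := fun h0 => hφ (by ext k; fin_cases k <;> simp [h0, hφ1, hφ2])
  have hv0 (i) : v i 0 = 0 := by
    by_contra hi
    have := hperp i (hS i hi)
    simp only [dotProduct, Fin.sum_univ_three, hφ1, hφ2, mul_zero, add_zero] at this
    exact hi ((mul_eq_zero.mp this).resolve_right hφ0)
  simpa [hv0] using hquartic ![0, 1, 1]

-- `xy - 2y² = ((x - y)² - (x - 3y)²) / 4`, and for a linear form `ℓ` and `s ≠ 0` the binomial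
-- `(ℓ + s z)⁵ - (ℓ - s z)⁵` is odd in `z`; two values of `s` per form cancel the `ℓ⁴ z` terms.
lemma quintic_eq_waringSum :
    (X 0 * X 1 * X 2 ^ 3 - 2 * X 1 ^ 2 * X 2 ^ 3 - C (1/5 : ℂ) * X 2 ^ 5 :
        MvPolynomial (Fin 3) ℂ) =
      waringSum 5 ![-1/240, 1/240, 1/480, -1/480, 1/800, -1/800, -1/1200, 1/1200]
        ![![1, -1, 1], ![1, -1, -1], ![1, -1, 2], ![1, -1, -2],
          ![-1, 3, 2], ![-1, 3, -2], ![-1, 3, 3], ![-1, 3, -3]] := by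
  refine MvPolynomial.funext fun P => ?_
  simp only [eval_waringSum, Fin.sum_univ_eight, dotProduct, Fin.sum_univ_three, Matrix.cons_val,
    map_sub, map_mul, map_pow, eval_X, eval_C, map_ofNat]
  ring

/-- The ternary quintic `xyz³ − 2y²z³ − (1/5)z⁵` has Waring rank exactly 8. -/
theorem stmt15 :
    waringRank 5
      (X 0 * X 1 * X 2 ^ 3 - 2 * X 1 ^ 2 * X 2 ^ 3 - C (1/5 : ℂ) * X 2 ^ 5 :
        MvPolynomial (Fin 3) ℂ) = 8 := by
  have hF' : pderiv 0 (X 0 * X 1 * X 2 ^ 3 - 2 * X 1 ^ 2 * X 2 ^ 3 - C (1/5 : ℂ) * X 2 ^ 5 :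
      MvPolynomial (Fin 3) ℂ) = X 1 * X 2 ^ 3 := by
    have h2 : pderiv 0 (2 : MvPolynomial (Fin 3) ℂ) = 0 := by
      simpa using (pderiv 0).map_natCast 2
    simp [pderiv_X, h2, mul_comm]
  obtain ⟨c, v, hF⟩ := exists_eq_waringSum_waringRank quintic_eq_waringSum
  obtain ⟨hc, hv⟩ := nondegenerate_of_eq_waringSum hF rfl
  exact le_antisymm (waringRank_le quintic_eq_waringSum) (eight_le_of_pderiv_eq hF' hF hc hv)
end
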